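/- arXiv:2008.03887 — 2 statements merged into one kernel-verified Lean document; each statement's English description precedes it below -/
import Mathlib

section
/- If G and H are graphs with no isolated vertices, then the paired domination number of the direct product G × H is at most the product of the paired domination numbers of G and H: γ_pr(G × H) ≤ γ_pr(G)·γ_pr(H). -/
set_option linter.unusedVariables false
set_option linter.unnecessarySeqFocus false

open SimpleGraph

variable {V : Type*} {W : Type*}

/-- The direct (tensor) product of two simple graphs. -/
def SimpleGraph.tensor (G : SimpleGraph V) (H : SimpleGraph W) : SimpleGraph (V × W) where
  Adj p q := G.Adj p.1 q.1 ∧ H.Adj p.2 q.2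
  symm := ⟨fun p q h => ⟨h.1.symm, h.2.symm⟩⟩
  loopless := ⟨fun p h => G.irrefl h.1⟩

/-- A dominating set: every vertex is in `D` or adjacent to a member of `D`. -/
def SimpleGraph.Dominating (G : SimpleGraph V) (D : Set V) : Prop :=
  ∀ v, ∃ u ∈ D, u = v ∨ G.Adj u v

/-- The domination number. -/
noncomputable def SimpleGraph.domNum (G : SimpleGraph V) : ℕ :=
  sInf {n | ∃ D : Set V, G.Dominating D ∧ D.ncard = n}

/-- A total dominating set. -/
def SimpleGraph.TotalDominating (G : SimpleGraph V) (D : Set V) : Prop :=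
  ∀ v, ∃ u ∈ D, G.Adj u v

/-- The total domination number. -/
noncomputable def SimpleGraph.totalDomNum (G : SimpleGraph V) : ℕ :=
  sInf {n | ∃ D : Set V, G.TotalDominating D ∧ D.ncard = n}

/-- A paired dominating set: dominating and the induced subgraph has a perfect matching. -/
def SimpleGraph.PairedDominating (G : SimpleGraph V) (D : Set V) : Prop :=
  G.Dominating D ∧ ∃ M : (G.induce D).Subgraph, M.IsPerfectMatching

/-- The paired domination number. -/
noncomputable def SimpleGraph.pairedDomNum (G : SimpleGraph V) : ℕ :=
  sInf {n | ∃ D : Set V, G.PairedDominating D ∧ D.ncard = n}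

/-- A 3-packing: vertices pairwise at distance greater than 3. -/
def SimpleGraph.Packing3 (G : SimpleGraph V) (P : Set V) : Prop :=
  P.Pairwise fun u v => ¬G.Reachable u v ∨ 3 < G.dist u v

/-- The 3-packing number. -/
noncomputable def SimpleGraph.packNum3 (G : SimpleGraph V) : ℕ :=
  sSup {n | ∃ P : Set V, G.Packing3 P ∧ P.ncard = n}

/-- A minimal dominating set. -/
def SimpleGraph.MinimalDominating (G : SimpleGraph V) (D : Set V) : Prop :=
  G.Dominating D ∧ ∀ D' ⊆ D, G.Dominating D' → D' = D

/-- The upper domination number. -/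
noncomputable def SimpleGraph.upperDomNum (G : SimpleGraph V) : ℕ :=
  sSup {n | ∃ D : Set V, G.MinimalDominating D ∧ D.ncard = n}

/-- `G` has no isolated vertices. -/
def SimpleGraph.NoIsolated (G : SimpleGraph V) : Prop := ∀ v, ∃ u, G.Adj u v

/-- Direct product of complete graphs `K_{n 0} × ... × K_{n (t-1)}`:
tuples adjacent iff they differ in every coordinate. -/
def prodCompleteGraphs {t : ℕ} (n : Fin t → ℕ) : SimpleGraph (∀ i, Fin (n i)) where
  Adj a b := a ≠ b ∧ ∀ i, a i ≠ b i
  symm := ⟨fun a b h => ⟨h.1.symm, fun i => (h.2 i).symm⟩⟩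
  loopless := ⟨fun a h => h.1 rfl⟩

/-- `G` together with a new pendant vertex (`none`) attached to `v`. -/
def addPendant (G : SimpleGraph V) (v : V) : SimpleGraph (Option V) where
  Adj x y :=
    match x, y with
    | some a, some b => G.Adj a b
    | some a, none => a = v
    | none, some b => b = v
    | none, none => False
  symm := by
    refine ⟨?_⟩
    rintro (_ | a) (_ | b) h <;> simp_all [SimpleGraph.adj_comm]
  loopless := by
    refine ⟨?_⟩
    rintro (_ | a) h <;> simp_all

/-- `G` with a path on `ℓ` vertices appended to vertex `u` via a bridge. -/
def appendPath (G : SimpleGraph V) (u : V) (ℓ : ℕ) : SimpleGraph (V ⊕ Fin ℓ) where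
  Adj x y :=
    match x, y with
    | Sum.inl a, Sum.inl b => G.Adj a b
    | Sum.inl a, Sum.inr j => a = u ∧ (j : ℕ) = 0
    | Sum.inr i, Sum.inl b => b = u ∧ (i : ℕ) = 0
    | Sum.inr i, Sum.inr j => (i : ℕ) + 1 = j ∨ (j : ℕ) + 1 = i
  symm := by
    refine ⟨?_⟩
    rintro (a | i) (b | j) h <;> simp_all [SimpleGraph.adj_comm] <;> tauto
  loopless := by
    refine ⟨?_⟩
    rintro (a | i) h <;> simp_all

/-- `G` with a pendant path on two vertices `(v,1)–(v,2)` attached to each vertex `(v,0)`. -/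
def attachPaths2 (G : SimpleGraph V) : SimpleGraph (V × Fin 3) where
  Adj p q :=
    (p.2 = 0 ∧ q.2 = 0 ∧ G.Adj p.1 q.1) ∨
    (p.1 = q.1 ∧ ((p.2 = 0 ∧ q.2 = 1) ∨ (p.2 = 1 ∧ q.2 = 0) ∨
      (p.2 = 1 ∧ q.2 = 2) ∨ (p.2 = 2 ∧ q.2 = 1)))
  symm := by
    refine ⟨?_⟩
    rintro ⟨a, i⟩ ⟨b, j⟩ h <;> simp_all [SimpleGraph.adj_comm] <;> tauto
  loopless := by
    refine ⟨?_⟩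
    rintro ⟨a, i⟩ h
    rcases h with ⟨-, -, h⟩ | ⟨-, h⟩
    · exact G.irrefl h
    · rcases h with ⟨h1, h2⟩ | ⟨h1, h2⟩ | ⟨h1, h2⟩ | ⟨h1, h2⟩ <;> simp_all


/-! A paired dominating set is total dominating (each vertex of it is dominated by its partner),
and products of total dominating sets are total dominating in the direct product; together with
the product of the two perfect matchings, the product of paired dominating sets is therefore
paired dominating. Without isolated vertices a minimum paired dominating set exists: the vertex
set of a maximal matching is one. -/

namespace SimpleGraph

variable {G : SimpleGraph V} {H : SimpleGraph W}

theorem exists_isPerfectMatching_induce_iff {D : Set V} :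
    (∃ M : (G.induce D).Subgraph, M.IsPerfectMatching) ↔
      ∃ M : G.Subgraph, M.IsMatching ∧ M.verts = D := by
  constructor
  · rintro ⟨M, hM, hMs⟩
    refine ⟨M.map (Embedding.induce D).toHom, hM.map _ Subtype.val_injective, ?_⟩
    rw [Subgraph.map_verts, Subgraph.isSpanning_iff.mp hMs, Set.image_univ]
    exact Subtype.range_coe
  · rintro ⟨M, hM, rfl⟩
    refine ⟨M.comap (Embedding.induce M.verts).toHom, ?_⟩
    rw [Subgraph.isPerfectMatching_iff]
    intro v
    obtain ⟨w, hvw, hw⟩ := hM v.2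
    refine ⟨⟨w, M.edge_vert hvw.symm⟩, ⟨M.adj_sub hvw, hvw⟩, ?_⟩
    rintro u ⟨-, hvu⟩
    exact Subtype.ext (hw u hvu)

def Subgraph.tensor (M : G.Subgraph) (N : H.Subgraph) : (G.tensor H).Subgraph where
  verts := M.verts ×ˢ N.verts
  Adj p q := M.Adj p.1 q.1 ∧ N.Adj p.2 q.2
  adj_sub h := ⟨M.adj_sub h.1, N.adj_sub h.2⟩
  edge_vert h := ⟨M.edge_vert h.1, N.edge_vert h.2⟩
  symm := ⟨fun _ _ h => ⟨h.1.symm, h.2.symm⟩⟩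

theorem Subgraph.IsMatching.tensor {M : G.Subgraph} {N : H.Subgraph} (hM : M.IsMatching)
    (hN : N.IsMatching) : (M.tensor N).IsMatching := by
  rintro ⟨v, w⟩ ⟨hv, hw⟩
  obtain ⟨v', hvv', hv'⟩ := hM hv
  obtain ⟨w', hww', hw'⟩ := hN hw
  exact ⟨(v', w'), ⟨hvv', hww'⟩, fun q hq => Prod.ext (hv' _ hq.1) (hw' _ hq.2)⟩

theorem TotalDominating.dominating {D : Set V} (hD : G.TotalDominating D) : G.Dominating D :=
  fun v => (hD v).imp fun _ hu => ⟨hu.1, Or.inr hu.2⟩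

theorem TotalDominating.tensor {D : Set V} {E : Set W} (hD : G.TotalDominating D)
    (hE : H.TotalDominating E) : (G.tensor H).TotalDominating (D ×ˢ E) := by
  rintro ⟨v, w⟩
  obtain ⟨u, hu, huv⟩ := hD v
  obtain ⟨x, hx, hxw⟩ := hE w
  exact ⟨(u, x), ⟨hu, hx⟩, huv, hxw⟩

theorem PairedDominating.totalDominating {D : Set V} (hD : G.PairedDominating D) :
    G.TotalDominating D := by
  obtain ⟨hdom, M, hM, hMs⟩ := hD
  intro v
  obtain ⟨u, hu, rfl | huv⟩ := hdom v
  · obtain ⟨w, hw, -⟩ := hM (hMs ⟨u, hu⟩)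
    exact ⟨w, w.2, (M.adj_sub hw).symm⟩
  · exact ⟨u, hu, huv⟩

theorem PairedDominating.tensor {D : Set V} {E : Set W} (hD : G.PairedDominating D)
    (hE : H.PairedDominating E) : (G.tensor H).PairedDominating (D ×ˢ E) := by
  refine ⟨(hD.totalDominating.tensor hE.totalDominating).dominating, ?_⟩
  obtain ⟨M, hM, hMD⟩ := exists_isPerfectMatching_induce_iff.mp hD.2
  obtain ⟨N, hN, hNE⟩ := exists_isPerfectMatching_induce_iff.mp hE.2
  exact exists_isPerfectMatching_induce_iff.mpr ⟨M.tensor N, hM.tensor hN, by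
    rw [← hMD, ← hNE]; rfl⟩

-- An undominated vertex would have an unmatched neighbour, and the edge between them would
-- extend `M`.
theorem dominating_verts_of_maximal_isMatching (hG : G.NoIsolated) {M : G.Subgraph}
    (hM : Maximal Subgraph.IsMatching M) : G.Dominating M.verts := by
  intro v
  by_contra! hv
  obtain ⟨u, huv⟩ := hG v
  have hvM : v ∉ M.verts := fun h => (hv v h).1 rfl
  have huM : u ∉ M.verts := fun h => (hv u h).2 huv
  have hdisj : Disjoint M.support (G.subgraphOfAdj huv).support := by
    rw [hM.prop.support_eq_verts, support_subgraphOfAdj, Set.disjoint_insert_right,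
      Set.disjoint_singleton_right]
    exact ⟨huM, hvM⟩
  have hle := hM.2 (hM.1.sup (.subgraphOfAdj huv) hdisj) le_sup_left
  exact hvM (hle.1 (Or.inr (by simp)))

theorem exists_pairedDominating [Finite V] (hG : G.NoIsolated) :
    ∃ D : Set V, G.PairedDominating D := by
  obtain ⟨M, -, hM⟩ :=
    Finite.exists_le_maximal (α := G.Subgraph) (p := Subgraph.IsMatching) (a := ⊥) fun _ h => h.elim
  exact ⟨M.verts, dominating_verts_of_maximal_isMatching hG hM,
    exists_isPerfectMatching_induce_iff.mpr ⟨M, hM.prop, rfl⟩⟩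

theorem pairedDomNum_le {D : Set V} (hD : G.PairedDominating D) :
    G.pairedDomNum ≤ D.ncard :=
  Nat.sInf_le ⟨D, hD, rfl⟩

theorem exists_pairedDominating_ncard_eq_pairedDomNum [Finite V] (hG : G.NoIsolated) :
    ∃ D : Set V, G.PairedDominating D ∧ D.ncard = G.pairedDomNum := by
  obtain ⟨D, hD⟩ := exists_pairedDominating hG
  exact Nat.sInf_mem (s := {n | ∃ D : Set V, G.PairedDominating D ∧ D.ncard = n})
    ⟨_, D, hD, rfl⟩

end SimpleGraph

theorem stmt0 {V W : Type*} [Fintype V] [Fintype W] (G : SimpleGraph V) (H : SimpleGraph W)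
    (hG : G.NoIsolated) (hH : H.NoIsolated) :
    (G.tensor H).pairedDomNum ≤ G.pairedDomNum * H.pairedDomNum := by
  obtain ⟨D, hD, hDcard⟩ := G.exists_pairedDominating_ncard_eq_pairedDomNum hG
  obtain ⟨E, hE, hEcard⟩ := H.exists_pairedDominating_ncard_eq_pairedDomNum hH
  calc (G.tensor H).pairedDomNum ≤ (D ×ˢ E).ncard := pairedDomNum_le (hD.tensor hE)
    _ = G.pairedDomNum * H.pairedDomNum := by rw [Set.ncard_prod, hDcard, hEcard]
end

section
/- Fix t ≥ 3 and n_i ≥ 2t+1 for 1 ≤ i ≤ t, and let G = K_{n_1} × ... × K_{n_t}. For nonnegative integers a, b, γ_pr(G^{·a} × G^{·b}) ≤ 2^{a+b}((a+2)t + 2a + 2) + 2^b·b·(t + a + 2), where G^{·ℓ} denotes G with a path on ℓ vertices appended via a bridge. -/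
set_option linter.unusedVariables false
set_option linter.unnecessarySeqFocus false

open SimpleGraph

variable {V : Type*} {W : Type*}

/-!
Write `G` for the product of complete graphs. Shifted diagonals give two sequences `c`, `c'` of
`2t + 1` pairwise adjacent vertices of `G`, avoiding `u` and `v` respectively. A vertex of `G`
agrees in some coordinate with at most `t` members of such a sequence, so every vertex is adjacent
to one of `c 0, …, c (2t-1)`, and every pair `(x, y)` is adjacent to a diagonal pair `(c m, c' m)`
with `m ≤ 2t`. The paired dominating set consists of these `2t + 1` diagonal pairs together with
`(c 0, c' 1)`, the products of `{c 0, …, c (2t-1)}` with the vertices of the appended paths, and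
the product of the two appended paths, where a path of odd length is extended by its attachment
vertex to have an even number `p_a = 2⌈a/2⌉ ≤ 2a` of vertices. Each block is a disjoint union of
edges of the tensor product, and the total size `2t + 2 + 2t (p_a + p_b) + p_a p_b` lies below
the stated bound.
-/

namespace SimpleGraph

variable {G : SimpleGraph V} {H : SimpleGraph W}

def IsPairing (G : SimpleGraph V) (D : Set V) (μ : V → V) : Prop :=
  ∀ x ∈ D, μ x ∈ D ∧ μ (μ x) = x ∧ G.Adj x (μ x)

theorem IsPairing.exists_isPerfectMatching {D : Set V} {μ : V → V} (h : G.IsPairing D μ) :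
    ∃ M : (G.induce D).Subgraph, M.IsPerfectMatching := by
  refine ⟨⟨Set.univ, fun x y => (y : V) = μ x ∨ (x : V) = μ y, ?_, fun _ => trivial, ?_⟩,
    ?_, fun _ => trivial⟩
  · rintro ⟨x, hx⟩ ⟨y, hy⟩ (rfl | rfl)
    · exact (h x hx).2.2
    · exact (h y hy).2.2.symm
  · exact ⟨fun _ _ => Or.symm⟩
  · rintro ⟨x, hx⟩ -
    refine ⟨⟨μ x, (h x hx).1⟩, Or.inl rfl, ?_⟩
    rintro ⟨y, hy⟩ (rfl | hxy)
    · rfl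
    · exact Subtype.ext (hxy ▸ (h y hy).2.1).symm

theorem IsPairing.exists_adj {D : Set V} {μ : V → V} (h : G.IsPairing D μ) {x : V}
    (hx : x ∈ D) : ∃ y ∈ D, G.Adj y x :=
  ⟨μ x, (h x hx).1, (h x hx).2.2.symm⟩

theorem IsPairing.union {D₁ D₂ : Set V} {μ₁ μ₂ : V → V} [DecidablePred (· ∈ D₁)]
    (h₁ : G.IsPairing D₁ μ₁) (h₂ : G.IsPairing D₂ μ₂) (hD : Disjoint D₁ D₂) :
    G.IsPairing (D₁ ∪ D₂) (D₁.piecewise μ₁ μ₂) := by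
  rintro x (hx | hx)
  · obtain ⟨hμx, hμμx, hadj⟩ := h₁ x hx
    rw [Set.piecewise_eq_of_mem _ _ _ hx, Set.piecewise_eq_of_mem _ _ _ hμx]
    exact ⟨Or.inl hμx, hμμx, hadj⟩
  · obtain ⟨hμx, hμμx, hadj⟩ := h₂ x hx
    have hx₁ : x ∉ D₁ := Set.disjoint_right.1 hD hx
    have hμx₁ : μ₂ x ∉ D₁ := Set.disjoint_right.1 hD hμx
    rw [Set.piecewise_eq_of_notMem _ _ _ hx₁, Set.piecewise_eq_of_notMem _ _ _ hμx₁]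
    exact ⟨Or.inr hμx, hμμx, hadj⟩

theorem IsPairing.prodMap {A : Set V} {B : Set W} {μ : V → V} {ν : W → W}
    (hA : G.IsPairing A μ) (hB : H.IsPairing B ν) :
    (G.tensor H).IsPairing (A ×ˢ B) (Prod.map μ ν) := by
  rintro ⟨x, y⟩ ⟨hx, hy⟩
  obtain ⟨hμx, hμμx, hadjx⟩ := hA x hx
  obtain ⟨hνy, hννy, hadjy⟩ := hB y hy
  exact ⟨⟨hμx, hνy⟩, Prod.ext hμμx hννy, hadjx, hadjy⟩

theorem exists_isPairing_image_Iio {f : ℕ → V} {m : ℕ} (hf : Set.InjOn f (Set.Iio (2 * m)))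
    (hadj : ∀ j < m, G.Adj (f (2 * j)) (f (2 * j + 1))) :
    ∃ μ, G.IsPairing (f '' Set.Iio (2 * m)) μ := by
  let partner : ℕ → ℕ := fun r => if r % 2 = 0 then r + 1 else r - 1
  refine ⟨f ∘ partner ∘ Function.invFunOn f (Set.Iio (2 * m)), ?_⟩
  have hμ : ∀ r < 2 * m, (f ∘ partner ∘ Function.invFunOn f (Set.Iio (2 * m))) (f r) =
      f (partner r) := fun r hr => by
    simp only [Function.comp_apply, hf.leftInvOn_invFunOn (Set.mem_Iio.2 hr)]
  have hpartner : ∀ r < 2 * m, partner r < 2 * m ∧ partner (partner r) = r := by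
    intro r hr
    simp only [partner]
    split_ifs <;> omega
  rintro _ ⟨r, hr, rfl⟩
  rw [Set.mem_Iio] at hr
  obtain ⟨hpr, hppr⟩ := hpartner r hr
  refine ⟨⟨partner r, hpr, (hμ r hr).symm⟩, by rw [hμ r hr, hμ _ hpr, hppr], ?_⟩
  rw [hμ r hr]
  simp only [partner]
  split_ifs with h
  · simpa [Nat.mul_div_cancel' (Nat.dvd_of_mod_eq_zero h)] using hadj (r / 2) (by omega)
  · have := hadj (r / 2) (by omega)
    rw [show 2 * (r / 2) = r - 1 by omega, show r - 1 + 1 = r by omega] at this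
    exact this.symm

theorem pairedDomNum_le_ncard {D : Set V} {μ : V → V} (hdom : G.Dominating D)
    (hμ : G.IsPairing D μ) : G.pairedDomNum ≤ D.ncard :=
  Nat.sInf_le ⟨D, ⟨hdom, hμ.exists_isPerfectMatching⟩, rfl⟩

theorem exists_isPairing_blocks {A P K : Set V} {A' Q K' : Set W} {C : Set (V × W)}
    {γ : V × W → V × W} {κ π : V → V} {κ' π' : W → W}
    (hAP : Disjoint A P) (hA'Q : Disjoint A' Q) (hKA : K ⊆ A) (hK'A' : K' ⊆ A')
    (hCA : C ⊆ A ×ˢ A') (hγ : (G.tensor H).IsPairing C γ) (hκ : G.IsPairing K κ)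
    (hπ : G.IsPairing P π) (hκ' : H.IsPairing K' κ') (hπ' : H.IsPairing Q π') :
    ∃ μ, (G.tensor H).IsPairing (C ∪ K ×ˢ Q ∪ P ×ˢ K' ∪ P ×ˢ Q) μ := by
  classical
  have hKP : Disjoint K P := hAP.mono_left hKA
  have hK'Q : Disjoint K' Q := hA'Q.mono_left hK'A'
  have hC_KQ : Disjoint C (K ×ˢ Q) :=
    (Set.disjoint_prod.2 (Or.inr hA'Q)).mono hCA (Set.prod_mono hKA le_rfl)
  have hC_PK' : Disjoint C (P ×ˢ K') := (Set.disjoint_prod.2 (Or.inl hAP)).mono_left hCA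
  have hC_PQ : Disjoint C (P ×ˢ Q) := (Set.disjoint_prod.2 (Or.inl hAP)).mono_left hCA
  refine ⟨_, (((hγ.union (hκ.prodMap hπ') hC_KQ).union (hπ.prodMap hκ') ?_).union
    (hπ.prodMap hπ') ?_)⟩
  · exact Set.disjoint_union_left.2 ⟨hC_PK', Set.disjoint_prod.2 (Or.inl hKP)⟩
  · refine Set.disjoint_union_left.2 ⟨Set.disjoint_union_left.2 ⟨hC_PQ, ?_⟩, ?_⟩
    · exact Set.disjoint_prod.2 (Or.inl hKP)
    · exact Set.disjoint_prod.2 (Or.inr hK'Q)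

end SimpleGraph

def appendPathFromEnd (v : V) (b : ℕ) (r : ℕ) : V ⊕ Fin b :=
  if h : r < b then Sum.inr ⟨b - 1 - r, by omega⟩ else Sum.inl v

section appendPath

variable {G : SimpleGraph V} {v : V} {b : ℕ}

theorem appendPath_adj_fromEnd {r : ℕ} (hr : r < b) :
    (appendPath G v b).Adj (appendPathFromEnd v b r) (appendPathFromEnd v b (r + 1)) := by
  unfold appendPathFromEnd
  rw [dif_pos hr]
  split_ifs with h
  · exact Or.inr (by simp only; omega)
  · exact ⟨rfl, by simp only; omega⟩

theorem appendPathFromEnd_injOn : Set.InjOn (appendPathFromEnd v b) (Set.Iio (b + 1)) := by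
  intro r hr s hs h
  simp only [Set.mem_Iio] at hr hs
  unfold appendPathFromEnd at h
  split_ifs at h with h₁ h₂ h₂ <;> simp only [Sum.inr.injEq, Fin.mk.injEq] at h
  all_goals omega

theorem eq_of_appendPathFromEnd_eq_inl {r : ℕ} {x : V}
    (h : appendPathFromEnd v b r = Sum.inl x) : x = v := by
  unfold appendPathFromEnd at h
  split_ifs at h
  exact (Sum.inl_injective h).symm

theorem inr_mem_image_appendPathFromEnd (j : Fin b) :
    Sum.inr j ∈ appendPathFromEnd v b '' Set.Iio b :=
  ⟨b - 1 - j, by simp only [Set.mem_Iio]; omega, by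
    rw [appendPathFromEnd, dif_pos (by omega)]
    exact congrArg Sum.inr (Fin.ext (by simp only; omega))⟩

end appendPath

/-- All vertices of the appended path, together with the attachment vertex `v` when `b` is odd,
so that the block has an even number of vertices. -/
def pathBlock (v : V) (b : ℕ) : Set (V ⊕ Fin b) :=
  appendPathFromEnd v b '' Set.Iio (2 * ((b + 1) / 2))

section pathBlock

variable {G : SimpleGraph V} {v : V} {b : ℕ}

theorem exists_isPairing_pathBlock : ∃ μ, (appendPath G v b).IsPairing (pathBlock v b) μ :=
  exists_isPairing_image_Iio (appendPathFromEnd_injOn.mono (Set.Iio_subset_Iio (by omega)))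
    fun _ hj => appendPath_adj_fromEnd (by omega)

theorem inr_mem_pathBlock (j : Fin b) : Sum.inr j ∈ pathBlock v b :=
  Set.image_mono (Set.Iio_subset_Iio (by omega)) (inr_mem_image_appendPathFromEnd j)

theorem eq_of_inl_mem_pathBlock {x : V} (h : Sum.inl x ∈ pathBlock v b) : x = v := by
  obtain ⟨r, -, hr⟩ := h
  exact eq_of_appendPathFromEnd_eq_inl hr

theorem exists_mem_pathBlock_adj_inr (j : Fin b) :
    ∃ y ∈ pathBlock v b, (appendPath G v b).Adj y (Sum.inr j) :=
  exists_isPairing_pathBlock.choose_spec.exists_adj (inr_mem_pathBlock j)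

theorem ncard_pathBlock_le : (pathBlock v b).ncard ≤ 2 * ((b + 1) / 2) :=
  (Set.ncard_image_le (Set.finite_Iio _)).trans (Set.ncard_Iio_nat _).le

end pathBlock

def cliqueBlock {a : ℕ} (c : ℕ → V) (N : ℕ) : Set (V ⊕ Fin a) :=
  (Sum.inl ∘ c) '' Set.Iio N

/-- The diagonal pairs `(c m, c' m)` for `m ≤ 2k`, paired consecutively; the last one, `m = 2k`,
is paired with the extra vertex `(c 0, c' 1)`. -/
def coreSeq {a b : ℕ} (c c' : ℕ → V) (k m : ℕ) : (V ⊕ Fin a) × (V ⊕ Fin b) :=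
  if m = 2 * k + 1 then (Sum.inl (c 0), Sum.inl (c' 1)) else (Sum.inl (c m), Sum.inl (c' m))

def pairedDomSet (u v : V) (a b k : ℕ) (c c' : ℕ → V) : Set ((V ⊕ Fin a) × (V ⊕ Fin b)) :=
  coreSeq c c' k '' Set.Iio (2 * k + 2) ∪ cliqueBlock c (2 * k) ×ˢ pathBlock v b ∪
    pathBlock u a ×ˢ cliqueBlock c' (2 * k) ∪ pathBlock u a ×ˢ pathBlock v b

section pairedDomSet

variable {G : SimpleGraph V} {u v : V} {a b k : ℕ} {c c' : ℕ → V}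

theorem exists_isPairing_cliqueBlock
    (hc : (Set.Iio (2 * k)).Pairwise fun i j => G.Adj (c i) (c j)) :
    ∃ μ, (appendPath G u a).IsPairing (cliqueBlock c (2 * k)) μ := by
  refine exists_isPairing_image_Iio ?_ fun j hj =>
    hc (Set.mem_Iio.2 (by omega)) (Set.mem_Iio.2 (by omega)) (by omega)
  exact Sum.inl_injective.comp_injOn
    (Set.injOn_iff_pairwise_ne.2 (hc.mono' fun _ _ h => h.ne))

theorem exists_isPairing_coreSeq (hk : 1 ≤ k)
    (hc : (Set.Iio (2 * k + 1)).Pairwise fun i j => G.Adj (c i) (c j))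
    (hc' : (Set.Iio (2 * k + 1)).Pairwise fun i j => G.Adj (c' i) (c' j)) :
    ∃ μ, ((appendPath G u a).tensor (appendPath G v b)).IsPairing
      (coreSeq c c' k '' Set.Iio (2 * k + 2)) μ := by
  have hinj : Set.InjOn c (Set.Iio (2 * k + 1)) :=
    Set.injOn_iff_pairwise_ne.2 (hc.mono' fun _ _ h => h.ne)
  have hinj' : Set.InjOn c' (Set.Iio (2 * k + 1)) :=
    Set.injOn_iff_pairwise_ne.2 (hc'.mono' fun _ _ h => h.ne)
  have hlt : ∀ {m}, m < 2 * k + 2 → m ≠ 2 * k + 1 → m ∈ Set.Iio (2 * k + 1) :=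
    fun h₁ h₂ => Set.mem_Iio.2 (by omega)
  have hmem : ∀ {m}, m < 2 * k + 1 → m ∈ Set.Iio (2 * k + 1) := Set.mem_Iio.2
  refine exists_isPairing_image_Iio (m := k + 1) ?_ fun j hj => ?_
  · intro m hm l hl h
    simp only [Set.mem_Iio] at hm hl
    simp only [coreSeq] at h
    split_ifs at h with h₁ h₂ h₂ <;> simp only [Prod.mk.injEq, Sum.inl.injEq] at h
    · omega
    · have h0 := hinj (hmem (by omega)) (hlt hl h₂) h.1
      have h1 := hinj' (hmem (by omega)) (hlt hl h₂) h.2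
      omega
    · have h0 := hinj (hlt hm h₁) (hmem (by omega)) h.1
      have h1 := hinj' (hlt hm h₁) (hmem (by omega)) h.2
      omega
    · exact hinj (hlt hm h₁) (hlt hl h₂) h.1
  · simp only [coreSeq, if_neg (show 2 * j ≠ 2 * k + 1 by omega)]
    split_ifs <;> exact ⟨hc (hmem (by omega)) (hmem (by omega)) (by omega),
      hc' (hmem (by omega)) (hmem (by omega)) (by omega)⟩

theorem disjoint_cliqueBlock_pathBlock {N : ℕ} (hcu : ∀ m < N, c m ≠ u) :
    Disjoint (cliqueBlock c N) (pathBlock u a) := by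
  rw [Set.disjoint_left]
  rintro _ ⟨m, hm, rfl⟩ hmem
  exact hcu m hm (eq_of_inl_mem_pathBlock hmem)

theorem exists_isPairing_pairedDomSet (hk : 1 ≤ k)
    (hc : (Set.Iio (2 * k + 1)).Pairwise fun i j => G.Adj (c i) (c j))
    (hc' : (Set.Iio (2 * k + 1)).Pairwise fun i j => G.Adj (c' i) (c' j))
    (hcu : ∀ m < 2 * k + 1, c m ≠ u) (hc'v : ∀ m < 2 * k + 1, c' m ≠ v) :
    ∃ μ, ((appendPath G u a).tensor (appendPath G v b)).IsPairing
      (pairedDomSet u v a b k c c') μ := by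
  have hIio : Set.Iio (2 * k) ⊆ Set.Iio (2 * k + 1) := Set.Iio_subset_Iio (by omega)
  have hsub : ∀ (c : ℕ → V) (a : ℕ), cliqueBlock (a := a) c (2 * k) ⊆ cliqueBlock c (2 * k + 1) :=
    fun _ _ => Set.image_mono hIio
  have hcore : coreSeq c c' k '' Set.Iio (2 * k + 2) ⊆
      cliqueBlock (a := a) c (2 * k + 1) ×ˢ cliqueBlock (a := b) c' (2 * k + 1) := by
    rintro _ ⟨m, hm, rfl⟩
    simp only [coreSeq]
    split_ifs with h
    · exact ⟨⟨0, Set.mem_Iio.2 (by omega), rfl⟩, ⟨1, Set.mem_Iio.2 (by omega), rfl⟩⟩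
    · have hm' : m ∈ Set.Iio (2 * k + 1) := Set.mem_Iio.2 (by rw [Set.mem_Iio] at hm; omega)
      exact ⟨⟨m, hm', rfl⟩, ⟨m, hm', rfl⟩⟩
  obtain ⟨γ, hγ⟩ := exists_isPairing_coreSeq (u := u) (v := v) (a := a) (b := b) hk hc hc'
  obtain ⟨κ, hκ⟩ := exists_isPairing_cliqueBlock (u := u) (a := a) (hc.mono hIio)
  obtain ⟨κ', hκ'⟩ := exists_isPairing_cliqueBlock (u := v) (a := b) (hc'.mono hIio)
  obtain ⟨π, hπ⟩ := exists_isPairing_pathBlock (G := G) (v := u) (b := a)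
  obtain ⟨π', hπ'⟩ := exists_isPairing_pathBlock (G := G) (v := v) (b := b)
  exact exists_isPairing_blocks (disjoint_cliqueBlock_pathBlock hcu)
    (disjoint_cliqueBlock_pathBlock hc'v) (hsub _ _) (hsub _ _) hcore hγ hκ hπ hκ' hπ'

theorem dominating_pairedDomSet (hdom : ∀ x, ∃ m < 2 * k, G.Adj (c m) x)
    (hdom' : ∀ y, ∃ m < 2 * k, G.Adj (c' m) y)
    (hdom₂ : ∀ x y, ∃ m < 2 * k + 1, G.Adj (c m) x ∧ G.Adj (c' m) y) :
    ((appendPath G u a).tensor (appendPath G v b)).Dominating (pairedDomSet u v a b k c c') := by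
  rintro ⟨x | i, y | j⟩
  · obtain ⟨m, hm, hx, hy⟩ := hdom₂ x y
    refine ⟨coreSeq c c' k m, Or.inl (Or.inl (Or.inl ⟨m, Set.mem_Iio.2 (by omega), rfl⟩)),
      Or.inr ?_⟩
    rw [coreSeq, if_neg (by omega)]
    exact ⟨hx, hy⟩
  · obtain ⟨m, hm, hx⟩ := hdom x
    obtain ⟨q, hq, hqj⟩ := exists_mem_pathBlock_adj_inr (G := G) (v := v) j
    exact ⟨(Sum.inl (c m), q), Or.inl (Or.inl (Or.inr ⟨⟨m, hm, rfl⟩, hq⟩)), Or.inr ⟨hx, hqj⟩⟩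
  · obtain ⟨m, hm, hy⟩ := hdom' y
    obtain ⟨p, hp, hpi⟩ := exists_mem_pathBlock_adj_inr (G := G) (v := u) i
    exact ⟨(p, Sum.inl (c' m)), Or.inl (Or.inr ⟨hp, ⟨m, hm, rfl⟩⟩), Or.inr ⟨hpi, hy⟩⟩
  · obtain ⟨p, hp, hpi⟩ := exists_mem_pathBlock_adj_inr (G := G) (v := u) i
    obtain ⟨q, hq, hqj⟩ := exists_mem_pathBlock_adj_inr (G := G) (v := v) j
    exact ⟨(p, q), Or.inr ⟨hp, hq⟩, Or.inr ⟨hpi, hqj⟩⟩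

theorem ncard_pairedDomSet_le :
    (pairedDomSet u v a b k c c').ncard ≤ (2 * k + 2) + 2 * k * (2 * ((b + 1) / 2)) +
      2 * ((a + 1) / 2) * (2 * k) + 2 * ((a + 1) / 2) * (2 * ((b + 1) / 2)) := by
  have hclique : ∀ {a : ℕ} {c : ℕ → V}, (cliqueBlock (a := a) c (2 * k)).ncard ≤ 2 * k :=
    (Set.ncard_image_le (Set.finite_Iio _)).trans (Set.ncard_Iio_nat _).le
  have hcore : (coreSeq (a := a) (b := b) c c' k '' Set.Iio (2 * k + 2)).ncard ≤ 2 * k + 2 :=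
    (Set.ncard_image_le (Set.finite_Iio _)).trans (Set.ncard_Iio_nat _).le
  unfold pairedDomSet
  refine (Set.ncard_union_le _ _).trans (add_le_add ((Set.ncard_union_le _ _).trans
    (add_le_add ((Set.ncard_union_le _ _).trans (add_le_add hcore ?_)) ?_)) ?_) <;>
    rw [Set.ncard_prod] <;> gcongr
  exacts [hclique, ncard_pathBlock_le, ncard_pathBlock_le, hclique, ncard_pathBlock_le,
    ncard_pathBlock_le]

end pairedDomSet

theorem pairedDomNum_appendPath_tensor_le {G : SimpleGraph V} {u v : V} {a b k : ℕ}
    {c c' : ℕ → V} (hc : (Set.Iio (2 * k + 1)).Pairwise fun i j => G.Adj (c i) (c j))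
    (hc' : (Set.Iio (2 * k + 1)).Pairwise fun i j => G.Adj (c' i) (c' j))
    (hcu : ∀ m < 2 * k + 1, c m ≠ u) (hc'v : ∀ m < 2 * k + 1, c' m ≠ v)
    (hdom : ∀ x, ∃ m < 2 * k, G.Adj (c m) x) (hdom' : ∀ y, ∃ m < 2 * k, G.Adj (c' m) y)
    (hdom₂ : ∀ x y, ∃ m < 2 * k + 1, G.Adj (c m) x ∧ G.Adj (c' m) y) :
    ((appendPath G u a).tensor (appendPath G v b)).pairedDomNum ≤
      (2 * k + 2) + 2 * k * (2 * ((b + 1) / 2)) + 2 * ((a + 1) / 2) * (2 * k) +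
        2 * ((a + 1) / 2) * (2 * ((b + 1) / 2)) := by
  have hk : 1 ≤ k := by
    obtain ⟨m, hm, -⟩ := hdom u
    omega
  obtain ⟨μ, hμ⟩ := exists_isPairing_pairedDomSet hk hc hc' hcu hc'v
  exact (pairedDomNum_le_ncard (dominating_pairedDomSet hdom hdom' hdom₂) hμ).trans
    ncard_pairedDomSet_le

section coordinates

variable {ι : Type*} {N : ℕ}

theorem ncard_setOf_exists_apply_eq_le [Fintype ι] {β : ι → Type*} {c : ℕ → ∀ i, β i}
    (hc : ∀ i, Set.InjOn (fun m => c m i) (Set.Iio N)) (x : ∀ i, β i) :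
    {m | m < N ∧ ∃ i, c m i = x i}.ncard ≤ Fintype.card ι := by
  have hunion : {m | m < N ∧ ∃ i, c m i = x i} = ⋃ i, {m | m < N ∧ c m i = x i} := by
    ext m
    simp only [Set.mem_ofPred_eq, Set.mem_iUnion, exists_and_left]
  rw [hunion]
  refine (Set.ncard_iUnion_le_of_fintype _).trans ?_
  calc ∑ i, {m | m < N ∧ c m i = x i}.ncard ≤ ∑ _i : ι, 1 := by
        refine Finset.sum_le_sum fun i _ => ?_
        rw [Set.ncard_le_one ((Set.finite_Iio N).subset fun m hm => hm.1)]
        exact fun m hm l hl => hc i hm.1 hl.1 (hm.2.trans hl.2.symm)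
    _ = Fintype.card ι := by simp

theorem exists_lt_forall_apply_ne [Fintype ι] {β : ι → Type*} {c : ℕ → ∀ i, β i}
    (hc : ∀ i, Set.InjOn (fun m => c m i) (Set.Iio N)) (hN : Fintype.card ι < N)
    (x : ∀ i, β i) : ∃ m < N, ∀ i, c m i ≠ x i := by
  obtain ⟨m, hm, hbad⟩ := Set.exists_mem_notMem_of_ncard_lt_ncard
    (((ncard_setOf_exists_apply_eq_le hc x).trans_lt hN).trans_eq (Set.ncard_Iio_nat N).symm)
    ((Set.finite_Iio N).subset fun m hm => hm.1)
  exact ⟨m, hm, fun i h => hbad ⟨hm, i, h⟩⟩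

theorem exists_lt_forall_apply_ne₂ [Fintype ι] {β β' : ι → Type*} {c : ℕ → ∀ i, β i}
    {c' : ℕ → ∀ i, β' i} (hc : ∀ i, Set.InjOn (fun m => c m i) (Set.Iio N))
    (hc' : ∀ i, Set.InjOn (fun m => c' m i) (Set.Iio N)) (hN : 2 * Fintype.card ι < N)
    (x : ∀ i, β i) (y : ∀ i, β' i) :
    ∃ m < N, (∀ i, c m i ≠ x i) ∧ ∀ i, c' m i ≠ y i := by
  have hbad : ({m | m < N ∧ ∃ i, c m i = x i} ∪ {m | m < N ∧ ∃ i, c' m i = y i}).ncard <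
      (Set.Iio N).ncard := by
    rw [Set.ncard_Iio_nat]
    have := ncard_setOf_exists_apply_eq_le hc x
    have := ncard_setOf_exists_apply_eq_le hc' y
    exact (Set.ncard_union_le _ _).trans_lt (by omega)
  obtain ⟨m, hm, hgood⟩ := Set.exists_mem_notMem_of_ncard_lt_ncard hbad
    ((Set.finite_Iio N).subset fun m hm => hm.elim (·.1) (·.1))
  exact ⟨m, hm, fun i h => hgood (Or.inl ⟨hm, i, h⟩), fun i h => hgood (Or.inr ⟨hm, i, h⟩)⟩

/-- Shifted diagonals `m ↦ (m, …, m, m + s, m, …)`: the shift `s ∈ {0, 1}` in coordinate `i₁`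
can always be chosen to miss `w`, since the two diagonals meet `w` at the same `m` if at all. -/
theorem exists_injOn_apply_forall_ne [DecidableEq ι] {n : ι → ℕ} (hN : ∀ i, N ≤ n i)
    {i₀ i₁ : ι} (h01 : i₀ ≠ i₁) (hn₁ : 2 ≤ n i₁) (w : ∀ i, Fin (n i)) :
    ∃ c : ℕ → ∀ i, Fin (n i), (∀ i, Set.InjOn (fun m => c m i) (Set.Iio N)) ∧
      ∀ m < N, c m ≠ w := by
  let d : ℕ → ℕ → ∀ i, Fin (n i) := fun s m i =>
    ⟨(m + if i = i₁ then s else 0) % n i, Nat.mod_lt _ (w i).pos⟩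
  have hinj : ∀ s i, Set.InjOn (fun m => d s m i) (Set.Iio N) := by
    intro s i m hm l hl h
    have hmod := Nat.ModEq.add_right_cancel' _ (congrArg Fin.val h : (d s m i : ℕ) = d s l i)
    have := hN i
    simp only [Set.mem_Iio] at hm hl
    rwa [Nat.ModEq, Nat.mod_eq_of_lt (by omega), Nat.mod_eq_of_lt (by omega)] at hmod
  suffices h : ∃ s, ∀ m < N, d s m ≠ w by
    obtain ⟨s, hs⟩ := h
    exact ⟨d s, hinj s, hs⟩
  by_contra! h
  obtain ⟨m, hm, hm₀⟩ := h 0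
  obtain ⟨l, hl, hl₁⟩ := h 1
  have h₀ := congrArg Fin.val (congrFun (hm₀.trans hl₁.symm) i₀)
  have h₁ := congrArg Fin.val (congrFun (hm₀.trans hl₁.symm) i₁)
  simp only [d, if_neg h01, ↓reduceIte, add_zero] at h₀ h₁
  have := hN i₀
  rw [Nat.mod_eq_of_lt (by omega), Nat.mod_eq_of_lt (by omega)] at h₀
  subst h₀
  have := hN i₁
  rw [Nat.mod_eq_of_lt (by omega)] at h₁
  rcases (show m + 1 < n i₁ ∨ m + 1 = n i₁ by omega) with hlt | heq
  · rw [Nat.mod_eq_of_lt hlt] at h₁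
    omega
  · rw [heq, Nat.mod_self] at h₁
    omega

end coordinates

section prodCompleteGraphs

variable {t N : ℕ} {n : Fin t → ℕ} {c c' : ℕ → ∀ i, Fin (n i)}

theorem prodCompleteGraphs_adj_of_forall_ne (ht : 0 < t) {x y : ∀ i, Fin (n i)}
    (h : ∀ i, x i ≠ y i) : (prodCompleteGraphs n).Adj x y :=
  ⟨fun hxy => h ⟨0, ht⟩ (congrFun hxy _), h⟩

theorem prodCompleteGraphs_pairwise_adj (ht : 0 < t)
    (hc : ∀ i, Set.InjOn (fun m => c m i) (Set.Iio N)) :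
    (Set.Iio N).Pairwise fun k l => (prodCompleteGraphs n).Adj (c k) (c l) :=
  fun _ hk _ hl hkl => prodCompleteGraphs_adj_of_forall_ne ht fun i h => hkl (hc i hk hl h)

theorem exists_lt_prodCompleteGraphs_adj (ht : 0 < t)
    (hc : ∀ i, Set.InjOn (fun m => c m i) (Set.Iio N)) (hN : t < N) (x : ∀ i, Fin (n i)) :
    ∃ m < N, (prodCompleteGraphs n).Adj (c m) x := by
  obtain ⟨m, hm, h⟩ := exists_lt_forall_apply_ne hc (by rwa [Fintype.card_fin]) x
  exact ⟨m, hm, prodCompleteGraphs_adj_of_forall_ne ht h⟩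

theorem exists_lt_prodCompleteGraphs_adj₂ (ht : 0 < t)
    (hc : ∀ i, Set.InjOn (fun m => c m i) (Set.Iio N))
    (hc' : ∀ i, Set.InjOn (fun m => c' m i) (Set.Iio N)) (hN : 2 * t < N)
    (x y : ∀ i, Fin (n i)) :
    ∃ m < N, (prodCompleteGraphs n).Adj (c m) x ∧ (prodCompleteGraphs n).Adj (c' m) y := by
  obtain ⟨m, hm, hx, hy⟩ := exists_lt_forall_apply_ne₂ hc hc' (by rwa [Fintype.card_fin]) x y
  exact ⟨m, hm, prodCompleteGraphs_adj_of_forall_ne ht hx,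
    prodCompleteGraphs_adj_of_forall_ne ht hy⟩

end prodCompleteGraphs

theorem pairedDomSet_bound_le (t a b : ℕ) :
    (2 * t + 2) + 2 * t * (2 * ((b + 1) / 2)) + 2 * ((a + 1) / 2) * (2 * t) +
        2 * ((a + 1) / 2) * (2 * ((b + 1) / 2)) ≤
      2 ^ (a + b) * ((a + 2) * t + 2 * a + 2) + 2 ^ b * b * (t + a + 2) := by
  have hpa : 2 * ((a + 1) / 2) ≤ 2 * a := by omega
  have hpb : 2 * ((b + 1) / 2) ≤ 2 * b := by omega
  have hab : a + b + 1 ≤ 2 ^ (a + b) := Nat.lt_two_pow_self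
  have hb : 2 * b ≤ 2 ^ b * b := by
    rcases Nat.eq_zero_or_pos b with rfl | hb
    · simp
    · have : 2 ≤ 2 ^ b := Nat.le_self_pow hb.ne' 2
      nlinarith
  have haa : a * t ≤ a * a * t := Nat.mul_le_mul_right t (Nat.le_mul_self a)
  calc _ ≤ (2 * t + 2) + 2 * t * (2 * b) + 2 * a * (2 * t) + 2 * a * (2 * b) := by gcongr
    _ ≤ (a + b + 1) * ((a + 2) * t + 2 * a + 2) + 2 * b * (t + a + 2) := by
        nlinarith [Nat.zero_le (a * b * t), Nat.zero_le (a * a)]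
    _ ≤ _ := by gcongr

theorem stmt14 {t : ℕ} (ht : 3 ≤ t) (n : Fin t → ℕ) (hn : ∀ i, 2 * t + 1 ≤ n i)
    (u v : ∀ i, Fin (n i)) (a b : ℕ) :
    ((appendPath (prodCompleteGraphs n) u a).tensor
        (appendPath (prodCompleteGraphs n) v b)).pairedDomNum ≤
      2 ^ (a + b) * ((a + 2) * t + 2 * a + 2) + 2 ^ b * b * (t + a + 2) := by
  have ht₀ : 0 < t := by omega
  have h01 : (⟨0, by omega⟩ : Fin t) ≠ ⟨1, by omega⟩ := by simp
  have hn₁ : 2 ≤ n ⟨1, by omega⟩ := by have := hn ⟨1, by omega⟩; omega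
  obtain ⟨c, hc, hcu⟩ := exists_injOn_apply_forall_ne hn h01 hn₁ u
  obtain ⟨c', hc', hc'v⟩ := exists_injOn_apply_forall_ne hn h01 hn₁ v
  have hsub : Set.Iio (2 * t) ⊆ Set.Iio (2 * t + 1) := Set.Iio_subset_Iio (by omega)
  refine (pairedDomNum_appendPath_tensor_le (prodCompleteGraphs_pairwise_adj ht₀ hc)
    (prodCompleteGraphs_pairwise_adj ht₀ hc') hcu hc'v ?_ ?_
    (exists_lt_prodCompleteGraphs_adj₂ ht₀ hc hc' (by omega))).trans (pairedDomSet_bound_le t a b)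
  · exact exists_lt_prodCompleteGraphs_adj ht₀ (fun i => (hc i).mono hsub) (by omega)
  · exact exists_lt_prodCompleteGraphs_adj ht₀ (fun i => (hc' i).mono hsub) (by omega)
end
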